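/- Let 0 < ε < δ < 1. Let f be analytic on the annulus A = {z : 1−δ < |z| < 1+δ}, with f(z) ≥ 0 on |z| = 1 and f not identically zero. Let D be a finite nonempty subset of the unit circle and let γ be analytic on A such that the zero set of γ in A is exactly D and every zero is simple. Let p_0, …, p_{n−1} be polynomials with p_k of degree k, positive leading coefficient, and ∮_{|z|=1} conj(p_j(z)) p_k(z) f(z) dz/(2πiz) = δ_{jk}; let q_j be the conjugate-coefficient polynomial of p_j. Define v(z) = −zγ'(z)/(|D| γ(z)) for |z| = 1−ε and v(z) = zγ'(z)/(|D| γ(z)) − 1 for |z| = 1+ε. Then the discrete Toeplitz determinant satisfies T_n(f, D) = 𝒯_n(f) · det[ δ_{jk} + ∮_{|z|=1−ε} q_j(1/z) p_k(z) f(z) v(z) dz/(2πiz) + ∮_{|z|=1+ε} q_j(1/z) p_k(z) f(z) v(z) dz/(2πiz) ]_{j,k=0}^{n−1}, all circles positively oriented. -/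

import Mathlib

/-!
Let `P` be the matrix whose `k`-th column is the coefficient vector of `p k`. On the unit circle
`z ^ (k - j) = conj (z ^ j) * z ^ k`, so conjugating a Toeplitz matrix by `P` turns the monomials
into the polynomials `p k`: `Pᴴ 𝒯ₙ(f) P` is the Gram matrix of the `p k`, which is `1`, and
`Pᴴ Tₙ(f, D) P = S` with `S j k = |D|⁻¹ ∑_{w ∈ D} q_j(1/w) p_k(w) f(w)`. Hence
`det Tₙ(f, D) = det 𝒯ₙ(f) * det S`.

The entries of `S` are those of the matrix in the statement by the residue theorem on the annulus
`1 - ε < |z| < 1 + ε`: `γ'/γ` has a simple pole with residue `1` at each point of `D`, so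
`|D| S j k = (2πi)⁻¹ (∮_{1+ε} - ∮_{1-ε}) g γ'/γ` with `g z = q_j(1/z) p_k(z) f(z)`, and `δ_{jk}`
cancels `(2πi)⁻¹ ∮_{1+ε} g(z) dz/z`, which is the orthonormality integral over the unit circle.
-/

open Finset Metric Set Complex Filter Topology Polynomial Matrix ComplexConjugate Real

noncomputable section

theorem conj_eval_eq_eval_map_conj_one_div {P : ℂ[X]} {z : ℂ} (hz : ‖z‖ = 1) :
    conj (P.eval z) = (P.map (starRingEnd ℂ)).eval (1 / z) := by
  rw [one_div, inv_eq_conj hz, eval_map, ← eval₂_at_apply]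

theorem differentiableAt_eval_one_div (q : ℂ[X]) {z : ℂ} (hz : z ≠ 0) :
    DifferentiableAt ℂ (fun z => q.eval (1 / z)) z :=
  (q.differentiableAt (x := 1 / z)).comp z ((differentiableAt_const 1).div differentiableAt_id hz)

theorem det_eq_det_mul_det_mul_mul {ι R : Type*} [Fintype ι] [DecidableEq ι] [CommRing R]
    {Q T P : Matrix ι ι R} (h : Q * T * P = 1) (M : Matrix ι ι R) :
    M.det = T.det * (Q * M * P).det := by
  have := congrArg det h
  simp only [det_mul, det_one] at this ⊢
  linear_combination (-M.det) * this

theorem CircleIntegrable.fun_const_mul {f : ℂ → ℂ} {c : ℂ} {R : ℝ} (hf : CircleIntegrable f c R)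
    (a : ℂ) : CircleIntegrable (fun z => a * f z) c R :=
  hf.const_mul a

theorem mul_of_circleIntegral_mul {l m n o : Type*} [Fintype m] [Fintype n] (Q : Matrix l m ℂ)
    (F : ℂ → Matrix m n ℂ) (P : Matrix n o ℂ) {c : ℂ} {R : ℝ}
    (hF : ∀ i j, CircleIntegrable (fun z => F z i j) c R) :
    Q * Matrix.of (fun i j => ∮ z in C(c, R), F z i j) * P =
      Matrix.of fun i j => ∮ z in C(c, R), (Q * F z * P) i j := by
  have hQF : ∀ i b, CircleIntegrable (fun z => ∑ a, Q i a * F z a b) c R := fun i b =>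
    CircleIntegrable.fun_sum _ fun a _ => (hF a b).fun_const_mul _
  ext i j
  simp only [mul_apply, of_apply, mul_comm _ (P _ j)]
  rw [circleIntegral.integral_fun_sum fun b _ => (hQF i b).fun_const_mul _]
  refine sum_congr rfl fun b _ => ?_
  rw [circleIntegral.integral_const_mul, circleIntegral.integral_fun_sum fun a _ =>
    (hF a b).fun_const_mul _]
  simp only [circleIntegral.integral_const_mul]

def zpowMatrix (n : ℕ) (z : ℂ) : Matrix (Fin n) (Fin n) ℂ :=
  Matrix.of fun j k => z ^ ((k : ℤ) - (j : ℤ))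

def coeffMatrix {n : ℕ} (p : Fin n → ℂ[X]) : Matrix (Fin n) (Fin n) ℂ :=
  Matrix.of fun a k => (p k).coeff a

section Toeplitz

variable {n : ℕ} {p : Fin n → ℂ[X]}

theorem zpowMatrix_eq_vecMulVec {z : ℂ} (hz : ‖z‖ = 1) :
    zpowMatrix n z =
      vecMulVec (star fun a : Fin n => z ^ (a : ℕ)) fun a : Fin n => z ^ (a : ℕ) := by
  have hz0 : z ≠ 0 := by rintro rfl; simp at hz
  ext j k
  simp only [zpowMatrix, of_apply, vecMulVec_apply, Pi.star_apply, star_pow, star_def,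
    ← inv_eq_conj hz, inv_pow, zpow_sub₀ hz0, zpow_natCast, div_eq_inv_mul]

theorem vecMul_coeffMatrix (hp : ∀ k, (p k).natDegree < n) (z : ℂ) :
    (fun a : Fin n => z ^ (a : ℕ)) ᵥ* coeffMatrix p = fun k => (p k).eval z := by
  ext k
  rw [eval_eq_sum_range' (hp k), ← Fin.sum_univ_eq_sum_range]
  simp only [vecMul, dotProduct, coeffMatrix, of_apply, mul_comm]

theorem conjTranspose_coeffMatrix_mul_zpowMatrix_mul (hp : ∀ k, (p k).natDegree < n) {z : ℂ}
    (hz : ‖z‖ = 1) :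
    (coeffMatrix p)ᴴ * zpowMatrix n z * coeffMatrix p =
      Matrix.of fun j k => conj ((p j).eval z) * (p k).eval z := by
  rw [zpowMatrix_eq_vecMulVec hz, mul_vecMulVec, vecMulVec_mul, ← star_vecMul,
    vecMul_coeffMatrix hp]
  rfl

theorem conjTranspose_coeffMatrix_mul_sum_mul (hp : ∀ k, (p k).natDegree < n) {D : Finset ℂ}
    (hD : ∀ z ∈ D, ‖z‖ = 1) (c : ℂ) (φ : ℂ → ℂ) :
    (coeffMatrix p)ᴴ *
        Matrix.of (fun j k : Fin n => c * ∑ z ∈ D, z ^ ((k : ℤ) - (j : ℤ)) * φ z) * coeffMatrix p =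
      Matrix.of fun j k => c * ∑ z ∈ D, conj ((p j).eval z) * (p k).eval z * φ z := by
  have hsum : Matrix.of (fun j k : Fin n => c * ∑ z ∈ D, z ^ ((k : ℤ) - (j : ℤ)) * φ z) =
      ∑ z ∈ D, (c * φ z) • zpowMatrix n z := by
    ext j k
    simp only [of_apply, Matrix.sum_apply, Matrix.smul_apply, zpowMatrix, smul_eq_mul, mul_sum]
    exact sum_congr rfl fun z _ => by ring
  rw [hsum, Matrix.mul_sum, Matrix.sum_mul]
  ext j k
  simp only [Matrix.mul_smul, Matrix.smul_mul, Matrix.sum_apply, Matrix.smul_apply, of_apply,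
    smul_eq_mul, mul_sum]
  refine sum_congr rfl fun z hz => ?_
  rw [conjTranspose_coeffMatrix_mul_zpowMatrix_mul hp (hD z hz), of_apply]
  ring

theorem conjTranspose_coeffMatrix_mul_circleIntegral_mul (hp : ∀ k, (p k).natDegree < n)
    {φ : ℂ → ℂ} (hφ : ContinuousOn φ (sphere 0 1)) (c : ℂ) :
    (coeffMatrix p)ᴴ *
        Matrix.of (fun j k : Fin n => (∮ z in C(0, 1), z ^ ((k : ℤ) - (j : ℤ)) * φ z / z) / c) *
        coeffMatrix p =
      Matrix.of fun j k => (∮ z in C(0, 1), conj ((p j).eval z) * (p k).eval z * φ z / z) / c := by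
  set F : ℂ → Matrix (Fin n) (Fin n) ℂ := fun z => (φ z / z / c) • zpowMatrix n z
  have hz0 : ∀ z ∈ sphere (0 : ℂ) 1, z ≠ 0 := fun z hz => ne_of_mem_sphere hz one_ne_zero
  have hF : ∀ j k, CircleIntegrable (fun z => F z j k) 0 1 := fun j k =>
    ContinuousOn.circleIntegrable zero_le_one fun z hz =>
      ((((hφ z hz).div continuousWithinAt_id (hz0 z hz)).div_const c).mul
        ((continuousAt_zpow₀ z _ (Or.inl (hz0 z hz))).continuousWithinAt))
  have hT : Matrix.of (fun j k : Fin n =>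
      (∮ z in C(0, 1), z ^ ((k : ℤ) - (j : ℤ)) * φ z / z) / c) =
        Matrix.of fun j k => ∮ z in C(0, 1), F z j k := by
    ext j k
    simp only [of_apply, F, Matrix.smul_apply, zpowMatrix, smul_eq_mul, div_eq_inv_mul _ c,
      ← circleIntegral.integral_const_mul]
    exact circleIntegral.integral_congr zero_le_one fun z _ => by ring
  rw [hT, mul_of_circleIntegral_mul _ _ _ hF]
  ext j k
  simp only [of_apply, div_eq_inv_mul _ c, ← circleIntegral.integral_const_mul]
  refine circleIntegral.integral_congr zero_le_one fun z hz => ?_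
  simp only [F, Matrix.mul_smul, Matrix.smul_mul, Matrix.smul_apply, smul_eq_mul,
    conjTranspose_coeffMatrix_mul_zpowMatrix_mul hp (mem_sphere_zero_iff_norm.1 hz), of_apply]
  ring

end Toeplitz

theorem exists_differentiableOn_eqOn_of_tendsto_sub_mul {U : Set ℂ} (hU : IsOpen U)
    {s : Finset ℂ} {G : ℂ → ℂ} (hG : DifferentiableOn ℂ G (U \ s))
    (hlim : ∀ w ∈ s, Tendsto (fun z => (z - w) * G z) (𝓝[≠] w) (𝓝 0)) :
    ∃ F : ℂ → ℂ, DifferentiableOn ℂ F U ∧ EqOn F G (U \ s) := by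
  classical
  refine ⟨fun z => if z ∈ s then limUnder (𝓝[≠] z) G else G z, fun w hw => ?_,
    fun z hz => if_neg hz.2⟩
  by_cases hws : w ∈ s
  · set V := U \ ((s.erase w : Finset ℂ) : Set ℂ)
    have hV : V ∈ 𝓝 w := (hU.sdiff (s.erase w).finite_toSet.isClosed).mem_nhds (by simp [hw])
    have hVw : V \ {w} = U \ s := by
      ext z; by_cases hzw : z = w <;> simp [V, hzw, hws]
    have ho : (fun z => G z - G w) =o[𝓝[≠] w] fun z => (z - w)⁻¹ := by
      rw [Asymptotics.isLittleO_iff_tendsto' (by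
        filter_upwards [self_mem_nhdsWithin] with z hz h0
        exact absurd (sub_eq_zero.1 (inv_eq_zero.1 h0)) hz)]
      have hlin : Tendsto (fun z => (z - w) * G w) (𝓝[≠] w) (𝓝 0) := by
        simpa using ((continuous_sub_right w).tendsto' w 0 (sub_self w)).mono_left
          nhdsWithin_le_nhds |>.mul_const (G w)
      simpa [div_inv_eq_mul, mul_comm, mul_sub] using (hlim w hws).sub hlin
    refine ((differentiableOn_update_limUnder_of_isLittleO hV (hVw ▸ hG) ho).differentiableAt
      hV).differentiableWithinAt.congr_of_eventuallyEq ?_ (by simp [hws])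
    filter_upwards [nhdsWithin_le_nhds hV] with z hz
    by_cases hzw : z = w
    · subst hzw; simp [hws]
    · have hzs : z ∉ s := fun hzs => hz.2 (by simp [hzs, hzw])
      simp [hzs, hzw]
  · have hUs : U \ s ∈ 𝓝 w := (hU.sdiff s.finite_toSet.isClosed).mem_nhds ⟨hw, hws⟩
    exact ((hG.differentiableAt hUs).differentiableWithinAt).congr_of_eventuallyEq
      (eventually_nhdsWithin_of_eventually_nhds (by
        filter_upwards [hUs] with z hz using if_neg hz.2)) (if_neg hws)

theorem circleIntegral_eq_of_differentiableAt_annulus {c : ℂ} {r R : ℝ} (hr : 0 < r)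
    (hrR : r ≤ R) {F : ℂ → ℂ} (hF : ∀ z ∈ closedBall c R \ ball c r, DifferentiableAt ℂ F z) :
    (∮ z in C(c, R), F z) = ∮ z in C(c, r), F z :=
  circleIntegral_eq_of_differentiable_on_annulus_off_countable hr hrR countable_empty
    (fun z hz => (hF z hz).continuousAt.continuousWithinAt)
    fun z hz => hF z ⟨ball_subset_closedBall hz.1.1, fun h => hz.1.2 (ball_subset_closedBall h)⟩

open scoped Classical in
theorem circleIntegral_sum_mul_sub_inv {c : ℂ} {ρ : ℝ} (hρ : 0 < ρ) {D : Finset ℂ}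
    (hD : ∀ w ∈ D, w ∉ sphere c ρ) (a : ℂ → ℂ) :
    (∮ z in C(c, ρ), ∑ w ∈ D, a w * (z - w)⁻¹) =
      2 * π * I * ∑ w ∈ D with w ∈ ball c ρ, a w := by
  have hint : ∀ w ∈ D, CircleIntegrable (fun z => a w * (z - w)⁻¹) c ρ := fun w hw =>
    (continuousOn_const.mul ((continuousOn_id.sub continuousOn_const).inv₀ fun z hz =>
      sub_ne_zero.2 (by rintro rfl; exact hD _ hw hz))).circleIntegrable hρ.le
  rw [circleIntegral.integral_fun_sum hint, Finset.sum_filter, Finset.mul_sum]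
  refine Finset.sum_congr rfl fun w hw => ?_
  rw [circleIntegral.integral_const_mul]
  split_ifs with hwb
  · rw [circleIntegral.integral_sub_inv_of_mem_ball hwb]; ring
  · have hwc : w ∉ closedBall c ρ := fun h =>
      (eq_or_lt_of_le (mem_closedBall.1 h)).elim (fun h' => hD w hw (mem_sphere.2 h'))
        fun h' => hwb (mem_ball.2 h')
    have hdiff : ∀ z ∈ closedBall c ρ, DifferentiableAt ℂ (fun z => (z - w)⁻¹) z := fun z hz =>
      (differentiableAt_id.sub_const w).inv (sub_ne_zero.2 (by rintro rfl; exact hwc hz))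
    rw [circleIntegral_eq_zero_of_differentiable_on_off_countable hρ.le countable_empty
      (fun z hz => (hdiff z hz).continuousAt.continuousWithinAt)
      fun z hz => hdiff z (ball_subset_closedBall hz.1), mul_zero, mul_zero]

theorem tendsto_sub_mul_mul_logDeriv_sub_sum {γ h : ℂ → ℂ} {D : Finset ℂ} {w : ℂ} (hw : w ∈ D)
    (hγ : AnalyticAt ℂ γ w) (hγw : γ w = 0) (hγ' : deriv γ w ≠ 0) (hh : ContinuousAt h w) :
    Tendsto (fun z => (z - w) * (h z * logDeriv γ z - ∑ v ∈ D, h v * (z - v)⁻¹))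
      (𝓝[≠] w) (𝓝 0) := by
  have hrest : ContinuousAt (fun z => ∑ v ∈ D.erase w, h v * (z - v)⁻¹) w :=
    (DifferentiableAt.fun_sum (𝕜 := ℂ) fun v hv => (differentiableAt_const _).mul
      ((differentiableAt_id.sub_const v).inv
        (sub_ne_zero.2 (ne_of_mem_erase hv).symm))).continuousAt
  have hlin : Tendsto (fun z : ℂ => z - w) (𝓝[≠] w) (𝓝 0) :=
    ((continuous_sub_right w).tendsto' w 0 (sub_self w)).mono_left nhdsWithin_le_nhds
  have := (((hh.tendsto.mono_left nhdsWithin_le_nhds).mul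
    (hγ.tendsto_mul_logDeriv_simple_zero hγw hγ')).sub_const (h w)).sub
    (hlin.mul (hrest.tendsto.mono_left nhdsWithin_le_nhds))
  rw [mul_one, sub_self, zero_mul, sub_zero] at this
  refine this.congr' ?_
  filter_upwards [self_mem_nhdsWithin] with z (hz : z ≠ w)
  rw [← add_sum_erase D _ hw, mul_sub, mul_add, mul_left_comm (z - w) (h w),
    mul_inv_cancel₀ (sub_ne_zero.2 hz)]
  ring

theorem sphere_outer_subset_annulus_sdiff {c : ℂ} {r R : ℝ} (hrR : r < R) {D : Finset ℂ}
    (hD : ∀ w ∈ D, w ∈ ball c R \ closedBall c r) :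
    sphere c R ⊆ (closedBall c R \ ball c r) \ D := fun z hz =>
  ⟨⟨sphere_subset_closedBall hz, fun h => (mem_ball.1 h).not_ge (mem_sphere.1 hz ▸ hrR.le)⟩,
    fun h => (mem_ball.1 (hD z h).1).ne (mem_sphere.1 hz)⟩

theorem sphere_inner_subset_annulus_sdiff {c : ℂ} {r R : ℝ} (hrR : r < R) {D : Finset ℂ}
    (hD : ∀ w ∈ D, w ∈ ball c R \ closedBall c r) :
    sphere c r ⊆ (closedBall c R \ ball c r) \ D := fun z hz =>
  ⟨⟨mem_closedBall.2 ((mem_sphere.1 hz).trans_le hrR.le), fun h => (mem_ball.1 h).ne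
    (mem_sphere.1 hz)⟩, fun h => (hD z h).2 (sphere_subset_closedBall hz)⟩

theorem AnalyticAt.differentiableAt_logDeriv {γ : ℂ → ℂ} {z : ℂ} (hγ : AnalyticAt ℂ γ z)
    (hz : γ z ≠ 0) : DifferentiableAt ℂ (logDeriv γ) z :=
  hγ.deriv.differentiableAt.div hγ.differentiableAt hz

theorem circleIntegrable_mul_logDeriv {c : ℂ} {ρ : ℝ} (hρ : 0 ≤ ρ) {U : Set ℂ} (hU : IsOpen U)
    {γ h : ℂ → ℂ} (hγ : AnalyticOnNhd ℂ γ U) (hh : DifferentiableOn ℂ h U)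
    (hs : sphere c ρ ⊆ U) (hγ0 : ∀ z ∈ sphere c ρ, γ z ≠ 0) :
    CircleIntegrable (fun z => h z * logDeriv γ z) c ρ :=
  ContinuousOn.circleIntegrable hρ fun z hz => ((hh.differentiableAt (hU.mem_nhds (hs hz))).mul
    ((hγ z (hs hz)).differentiableAt_logDeriv (hγ0 z hz))).continuousAt.continuousWithinAt

theorem circleIntegral_mul_logDeriv_sub_eq_sum {c : ℂ} {r R : ℝ} (hr : 0 < r) (hrR : r < R)
    {U : Set ℂ} (hU : IsOpen U) (hUann : closedBall c R \ ball c r ⊆ U)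
    {γ h : ℂ → ℂ} (hγ : AnalyticOnNhd ℂ γ U) (hh : DifferentiableOn ℂ h U)
    {D : Finset ℂ} (hD : ∀ w ∈ D, w ∈ ball c R \ closedBall c r)
    (hzero : ∀ z ∈ U, γ z = 0 ↔ z ∈ D) (hsimple : ∀ w ∈ D, deriv γ w ≠ 0) :
    (∮ z in C(c, R), h z * logDeriv γ z) - (∮ z in C(c, r), h z * logDeriv γ z) =
      2 * π * I * ∑ w ∈ D, h w := by
  classical
  set G := fun z => h z * logDeriv γ z - ∑ w ∈ D, h w * (z - w)⁻¹
  have hDU : ∀ w ∈ D, w ∈ U := fun w hw =>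
    hUann ⟨ball_subset_closedBall (hD w hw).1, fun h => (hD w hw).2 (ball_subset_closedBall h)⟩
  have hγ0 : ∀ z ∈ U \ D, γ z ≠ 0 := fun z hz h0 => hz.2 ((hzero z hz.1).1 h0)
  have hsum : ∀ z ∉ D, DifferentiableAt ℂ (fun z => ∑ w ∈ D, h w * (z - w)⁻¹) z := fun z hz =>
    DifferentiableAt.fun_sum fun w hw => (differentiableAt_const _).mul
      ((differentiableAt_id.sub_const w).inv (sub_ne_zero.2 (by rintro rfl; exact hz hw)))
  have hGd : ∀ z ∈ U \ D, DifferentiableAt ℂ G z := fun z hz =>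
    ((hh.differentiableAt (hU.mem_nhds hz.1)).mul
      ((hγ z hz.1).differentiableAt_logDeriv (hγ0 z hz))).sub (hsum z hz.2)
  -- `G` is `h * logDeriv γ` minus its principal parts, so it extends holomorphically to `U`.
  obtain ⟨F, hF, hFG⟩ := exists_differentiableOn_eqOn_of_tendsto_sub_mul hU
    (fun z hz => (hGd z hz).differentiableWithinAt) fun w hw =>
      tendsto_sub_mul_mul_logDeriv_sub_sum hw (hγ w (hDU w hw)) ((hzero w (hDU w hw)).2 hw)
        (hsimple w hw) (hh.differentiableAt (hU.mem_nhds (hDU w hw))).continuousAt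
  have hG : ∀ ρ, 0 < ρ → sphere c ρ ⊆ (closedBall c R \ ball c r) \ D →
      (∮ z in C(c, ρ), F z) =
        (∮ z in C(c, ρ), h z * logDeriv γ z) - 2 * π * I * ∑ w ∈ D with w ∈ ball c ρ, h w := by
    intro ρ hρ0 hρ
    have hρU : sphere c ρ ⊆ U \ D := fun z hz => ⟨hUann (hρ hz).1, (hρ hz).2⟩
    have hint' : CircleIntegrable (fun z => ∑ w ∈ D, h w * (z - w)⁻¹) c ρ :=
      ContinuousOn.circleIntegrable hρ0.le fun z hz =>
        (hsum z (hρU hz).2).continuousAt.continuousWithinAt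
    rw [circleIntegral.integral_congr hρ0.le (hFG.mono hρU), circleIntegral.integral_sub
      (circleIntegrable_mul_logDeriv hρ0.le hU hγ hh (fun z hz => (hρU hz).1)
        fun z hz => hγ0 z (hρU hz)) hint',
      circleIntegral_sum_mul_sub_inv hρ0 fun w hw hws => (hρ hws).2 hw]
  have hann := circleIntegral_eq_of_differentiableAt_annulus hr hrR.le fun z hz =>
    hF.differentiableAt (hU.mem_nhds (hUann hz))
  rw [hG R (hr.trans hrR) (sphere_outer_subset_annulus_sdiff hrR hD),
    hG r hr (sphere_inner_subset_annulus_sdiff hrR hD),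
    filter_true_of_mem fun w hw => (hD w hw).1,
    filter_false_of_mem fun w hw h => (hD w hw).2 (ball_subset_closedBall h), sum_empty] at hann
  linear_combination hann

-- `-(z γ' / (N γ))` and `z γ' / (N γ) - 1` are the weight `v` of the statement on the inner and
-- outer circle.
theorem circleIntegral_mul_neg_weight {r : ℝ} (hr : 0 < r) (g γ : ℂ → ℂ) (N : ℂ) :
    (∮ z in C(0, r), g z * (-(z * deriv γ z) / (N * γ z)) / z) =
      -(1 / N) * ∮ z in C(0, r), g z * logDeriv γ z := by
  rw [← circleIntegral.integral_const_mul]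
  refine circleIntegral.integral_congr hr.le fun z hz => ?_
  simp only [logDeriv_apply]
  linear_combination (-(1 / N) * (g z * (deriv γ z / γ z))) *
    mul_inv_cancel₀ (ne_of_mem_sphere hz hr.ne')

theorem circleIntegral_mul_weight_sub_one {R : ℝ} (hR : 0 < R) {g γ : ℂ → ℂ}
    (hint : CircleIntegrable (fun z => g z * logDeriv γ z) 0 R)
    (hint' : CircleIntegrable (fun z => g z / z) 0 R) (N : ℂ) :
    (∮ z in C(0, R), g z * (z * deriv γ z / (N * γ z) - 1) / z) =
      1 / N * (∮ z in C(0, R), g z * logDeriv γ z) - ∮ z in C(0, R), g z / z := by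
  rw [← circleIntegral.integral_const_mul, ← circleIntegral.integral_sub
    (hint.fun_const_mul _) hint']
  refine circleIntegral.integral_congr hR.le fun z hz => ?_
  simp only [logDeriv_apply]
  linear_combination (1 / N * (g z * (deriv γ z / γ z))) *
    mul_inv_cancel₀ (ne_of_mem_sphere hz hR.ne')

theorem circleIntegral_weights_eq_average {r R : ℝ} (hr : 0 < r) (hrR : r < R)
    {U : Set ℂ} (hU : IsOpen U) (hUann : closedBall 0 R \ ball 0 r ⊆ U)
    {γ g : ℂ → ℂ} (hγ : AnalyticOnNhd ℂ γ U) (hg : DifferentiableOn ℂ g U)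
    {D : Finset ℂ} (hD : ∀ w ∈ D, w ∈ ball 0 R \ closedBall 0 r)
    (hzero : ∀ z ∈ U, γ z = 0 ↔ z ∈ D) (hsimple : ∀ w ∈ D, deriv γ w ≠ 0)
    {ρ : ℝ} (hrρ : r ≤ ρ) (hρR : ρ ≤ R) {d : ℂ}
    (hd : (∮ z in C(0, ρ), g z / z) / (2 * π * I) = d) (N : ℂ) :
    d + (∮ z in C(0, r), g z * (-(z * deriv γ z) / (N * γ z)) / z) / (2 * π * I)
      + (∮ z in C(0, R), g z * (z * deriv γ z / (N * γ z) - 1) / z) / (2 * π * I)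
      = 1 / N * ∑ w ∈ D, g w := by
  have hR0 : 0 < R := hr.trans hrR
  have hR := sphere_outer_subset_annulus_sdiff hrR hD
  have hint : CircleIntegrable (fun z => g z * logDeriv γ z) 0 R :=
    circleIntegrable_mul_logDeriv hR0.le hU hγ hg (fun z hz => hUann (hR hz).1)
      fun z hz h0 => (hR hz).2 ((hzero z (hUann (hR hz).1)).1 h0)
  have hint' : CircleIntegrable (fun z => g z / z) 0 R :=
    ContinuousOn.circleIntegrable hR0.le fun z hz =>
      ((hg.differentiableAt (hU.mem_nhds (hUann (hR hz).1))).continuousAt.div continuousAt_id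
        (ne_of_mem_sphere hz hR0.ne')).continuousWithinAt
  have hdeform : (∮ z in C(0, R), g z / z) = ∮ z in C(0, ρ), g z / z :=
    circleIntegral_eq_of_differentiableAt_annulus (hr.trans_le hrρ) hρR fun z hz =>
      have hzU := hUann ⟨hz.1, fun h => hz.2 (ball_subset_ball hrρ h)⟩
      (hg.differentiableAt (hU.mem_nhds hzU)).div differentiableAt_id
        fun h0 => hz.2 (h0 ▸ mem_ball_self (hr.trans_le hrρ))
  have hres := circleIntegral_mul_logDeriv_sub_eq_sum hr hrR hU hUann hγ hg hD hzero hsimple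
  rw [circleIntegral_mul_neg_weight hr, circleIntegral_mul_weight_sub_one hR0 hint hint',
    hdeform, ← hd, ← add_div, ← add_div, div_eq_iff two_pi_I_ne_zero]
  linear_combination 1 / N * hres

theorem det_discreteToeplitz_eq_det_mul_det {n : ℕ} {r R : ℝ} (hr : 0 < r) (hr1 : r < 1)
    (h1R : 1 < R) {U : Set ℂ} (hU : IsOpen U) (hUann : closedBall 0 R \ ball 0 r ⊆ U)
    (hU0 : (0 : ℂ) ∉ U) {f γ : ℂ → ℂ} (hf : AnalyticOnNhd ℂ f U) {D : Finset ℂ}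
    (hDcirc : ∀ z ∈ D, ‖z‖ = 1) (hγ : AnalyticOnNhd ℂ γ U) (hzero : ∀ z ∈ U, γ z = 0 ↔ z ∈ D)
    (hsimple : ∀ z ∈ D, deriv γ z ≠ 0) {p : Fin n → ℂ[X]} (hp : ∀ k, (p k).natDegree < n)
    (horth : ∀ j k : Fin n,
      (∮ z in C(0, 1), conj ((p j).eval z) * (p k).eval z * f z / z) / (2 * π * I) =
        if j = k then 1 else 0) :
    (Matrix.of fun j k : Fin n => 1 / (D.card : ℂ) * ∑ z ∈ D, z ^ ((k : ℤ) - (j : ℤ)) * f z).det =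
      (Matrix.of fun j k : Fin n =>
        (∮ z in C(0, 1), z ^ ((k : ℤ) - (j : ℤ)) * f z / z) / (2 * π * I)).det *
      (Matrix.of fun j k : Fin n => (if j = k then (1 : ℂ) else 0)
        + (∮ z in C(0, r), ((p j).map (starRingEnd ℂ)).eval (1 / z) * (p k).eval z * f z *
            (-(z * deriv γ z) / ((D.card : ℂ) * γ z)) / z) / (2 * π * I)
        + (∮ z in C(0, R), ((p j).map (starRingEnd ℂ)).eval (1 / z) * (p k).eval z * f z *
            (z * deriv γ z / ((D.card : ℂ) * γ z) - 1) / z) / (2 * π * I)).det := by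
  have hS1 : sphere (0 : ℂ) 1 ⊆ U := fun z hz => hUann
    ⟨closedBall_subset_closedBall h1R.le (sphere_subset_closedBall hz),
      fun h => (mem_ball.1 h).not_ge (mem_sphere.1 hz ▸ hr1.le)⟩
  have hD : ∀ w ∈ D, w ∈ ball 0 R \ closedBall 0 r := fun w hw => by
    simp [hDcirc w hw, hr1, h1R]
  have hg : ∀ j k, DifferentiableOn ℂ
      (fun z => ((p j).map (starRingEnd ℂ)).eval (1 / z) * (p k).eval z * f z) U :=
    fun j k z hz => (((differentiableAt_eval_one_div _ (ne_of_mem_of_not_mem hz hU0)).mul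
      (Polynomial.differentiableAt _)).mul (hf z hz).differentiableAt).differentiableWithinAt
  have hT : (coeffMatrix p)ᴴ * Matrix.of (fun j k : Fin n =>
      (∮ z in C(0, 1), z ^ ((k : ℤ) - (j : ℤ)) * f z / z) / (2 * π * I)) * coeffMatrix p = 1 := by
    rw [conjTranspose_coeffMatrix_mul_circleIntegral_mul hp (hf.continuousOn.mono hS1)]
    ext j k
    rw [of_apply, horth, one_apply]
  refine (det_eq_det_mul_det_mul_mul hT _).trans ?_
  rw [conjTranspose_coeffMatrix_mul_sum_mul hp hDcirc]
  congr 2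
  ext j k
  have hunit : (∮ z in C(0, 1), ((p j).map (starRingEnd ℂ)).eval (1 / z) * (p k).eval z * f z / z)
      / (2 * π * I) = if j = k then 1 else 0 := by
    rw [← horth j k]
    congr 1
    refine circleIntegral.integral_congr zero_le_one fun z hz => ?_
    rw [conj_eval_eq_eval_map_conj_one_div (mem_sphere_zero_iff_norm.1 hz)]
  rw [of_apply, of_apply, circleIntegral_weights_eq_average hr (hr1.trans h1R) hU hUann hγ (hg j k)
    hD hzero hsimple hr1.le h1R.le hunit]
  refine congrArg _ (sum_congr rfl fun w hw => ?_)
  rw [conj_eval_eq_eval_map_conj_one_div (hDcirc w hw)]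

theorem stmt_4_general (n : ℕ) (ε δ : ℝ) (hε : 0 < ε) (hεδ : ε < δ) (hδ : δ < 1)
    (A : Set ℂ) (hA : A = {z : ℂ | 1 - δ < ‖z‖ ∧ ‖z‖ < 1 + δ})
    (f γ : ℂ → ℂ)
    (hf : AnalyticOnNhd ℂ f A)
    (D : Finset ℂ) (hDcirc : ∀ z ∈ D, ‖z‖ = 1)
    (hγ : AnalyticOnNhd ℂ γ A)
    (hzero : ∀ z ∈ A, (γ z = 0 ↔ z ∈ D))
    (hsimple : ∀ z ∈ D, deriv γ z ≠ 0)
    (p : Fin n → Polynomial ℂ)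
    (hdeg : ∀ k, (p k).natDegree = (k : ℕ))
    (horth : ∀ j k : Fin n,
      (∮ z in C(0, 1), (starRingEnd ℂ) ((p j).eval z) * (p k).eval z * f z / z)
        / (2 * Real.pi * Complex.I) = if j = k then 1 else 0) :
    Matrix.det (Matrix.of fun j k : Fin n =>
      (1 / (D.card : ℂ)) * ∑ z ∈ D, z ^ ((k : ℤ) - (j : ℤ)) * f z)
    = Matrix.det (Matrix.of fun j k : Fin n =>
        (∮ z in C(0, 1), z ^ ((k : ℤ) - (j : ℤ)) * f z / z) / (2 * Real.pi * Complex.I)) *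
      Matrix.det (Matrix.of fun j k : Fin n =>
        (if j = k then (1 : ℂ) else 0)
        + (∮ z in C(0, 1 - ε), ((p j).map (starRingEnd ℂ)).eval (1 / z) * (p k).eval z * f z *
            (-(z * deriv γ z) / ((D.card : ℂ) * γ z)) / z) / (2 * Real.pi * Complex.I)
        + (∮ z in C(0, 1 + ε), ((p j).map (starRingEnd ℂ)).eval (1 / z) * (p k).eval z * f z *
            (z * deriv γ z / ((D.card : ℂ) * γ z) - 1) / z) / (2 * Real.pi * Complex.I)) := by
  have hann : closedBall (0 : ℂ) (1 + ε) \ ball 0 (1 - ε) ⊆ A := fun z hz => by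
    have h1 := mem_closedBall_zero_iff.1 hz.1
    have h2 : 1 - ε ≤ ‖z‖ := not_lt.1 fun h => hz.2 (mem_ball_zero_iff.2 h)
    exact hA ▸ ⟨by linarith, by linarith⟩
  have hAopen : IsOpen A := hA ▸
    (isOpen_lt continuous_const continuous_norm).inter (isOpen_lt continuous_norm continuous_const)
  have hA0 : (0 : ℂ) ∉ A := fun h0 => by
    rw [hA] at h0; linarith [h0.1, norm_zero (E := ℂ)]
  exact det_discreteToeplitz_eq_det_mul_det (by linarith) (by linarith) (by linarith) hAopen hann
    hA0 hf hDcirc hγ hzero hsimple (fun k => (hdeg k).trans_lt k.isLt) horth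

/-- Finite-rank determinant form of Theorem 1 of the paper: the discrete
Toeplitz determinant `T_n(f, D)` equals the continuous Toeplitz determinant `𝒯_n(f)` times the
`n × n` determinant `det[δ_{jk} + ∮_{|z|=1−ε} q_j(1/z) p_k(z) f(z) v(z) dz/(2πiz)
+ ∮_{|z|=1+ε} q_j(1/z) p_k(z) f(z) v(z) dz/(2πiz)]`, where
`v(z) = −zγ'(z)/(|D|γ(z))` on `|z| = 1−ε` and `v(z) = zγ'(z)/(|D|γ(z)) − 1` on `|z| = 1+ε`. -/
theorem stmt_4 (n : ℕ) (hn : 0 < n) (ε δ : ℝ) (hε : 0 < ε) (hεδ : ε < δ) (hδ : δ < 1)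
    (A : Set ℂ) (hA : A = {z : ℂ | 1 - δ < ‖z‖ ∧ ‖z‖ < 1 + δ})
    (f γ : ℂ → ℂ)
    (hf : AnalyticOnNhd ℂ f A)
    (hf_nonneg : ∀ z : ℂ, ‖z‖ = 1 → 0 ≤ (f z).re ∧ (f z).im = 0)
    (hf_ne : ∃ z : ℂ, ‖z‖ = 1 ∧ f z ≠ 0)
    (D : Finset ℂ) (hD : D.Nonempty) (hDcirc : ∀ z ∈ D, ‖z‖ = 1)
    (hγ : AnalyticOnNhd ℂ γ A)
    (hzero : ∀ z ∈ A, (γ z = 0 ↔ z ∈ D))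
    (hsimple : ∀ z ∈ D, deriv γ z ≠ 0)
    (p : Fin n → Polynomial ℂ) (κ : Fin n → ℝ)
    (hdeg : ∀ k, (p k).natDegree = (k : ℕ))
    (hκpos : ∀ k, 0 < κ k)
    (hlead : ∀ k, (p k).leadingCoeff = (κ k : ℂ))
    (horth : ∀ j k : Fin n,
      (∮ z in C(0, 1), (starRingEnd ℂ) ((p j).eval z) * (p k).eval z * f z / z)
        / (2 * Real.pi * Complex.I) = if j = k then 1 else 0) :
    Matrix.det (Matrix.of fun j k : Fin n =>
      (1 / (D.card : ℂ)) * ∑ z ∈ D, z ^ ((k : ℤ) - (j : ℤ)) * f z)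
    = Matrix.det (Matrix.of fun j k : Fin n =>
        (∮ z in C(0, 1), z ^ ((k : ℤ) - (j : ℤ)) * f z / z) / (2 * Real.pi * Complex.I)) *
      Matrix.det (Matrix.of fun j k : Fin n =>
        (if j = k then (1 : ℂ) else 0)
        + (∮ z in C(0, 1 - ε), ((p j).map (starRingEnd ℂ)).eval (1 / z) * (p k).eval z * f z *
            (-(z * deriv γ z) / ((D.card : ℂ) * γ z)) / z) / (2 * Real.pi * Complex.I)
        + (∮ z in C(0, 1 + ε), ((p j).map (starRingEnd ℂ)).eval (1 / z) * (p k).eval z * f z *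
            (z * deriv γ z / ((D.card : ℂ) * γ z) - 1) / z) / (2 * Real.pi * Complex.I)) :=
  stmt_4_general n ε δ hε hεδ hδ A hA f γ hf D hDcirc hγ hzero hsimple p hdeg horth

end
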